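/- Let s be a seaweed subalgebra of gl(N,ℂ) determined by compositions a and b of N. Then the nilradical of s decomposes as n(s) = span{E_{p,q} ∈ s : E_{q,p} ∉ s} ⊕ Z(s), where Z(s) is the center of s. In particular, n(s) is the direct sum of an abelian Lie algebra of dimension |PS(a) ∩ PS(b)| and a nilpotent Lie poset algebra. -/

import Mathlib

noncomputable section

attribute [local instance 100] LieRing.ofAssociativeRing

/-- The elementary matrix `E_{p,q}` in `gl(N,ℂ)`. -/
def Emat (N : ℕ) (p q : Fin N) : Matrix (Fin N) (Fin N) ℂ := Matrix.single p q 1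

/-- The set of partial sums `PS(c) = {c₁+⋯+c_j : 1 ≤ j ≤ r}` of a composition `c`. -/
def PS (c : List ℕ) : Set ℕ := {k | ∃ j, 1 ≤ j ∧ j ≤ c.length ∧ k = (c.take j).sum}

/-- Positions `i` and `j` (0-indexed members of `[N]`) lie in a common consecutive block of the
composition `c`: no partial sum of `c` separates them. -/
def sameBlock (c : List ℕ) (i j : ℕ) : Prop :=
  ∀ k ∈ PS c, ¬ (min i j < k ∧ k ≤ max i j)

/-- The spanning set of the seaweed algebra `p(a₁|⋯|a_n / b₁|⋯|b_m)`: all diagonal `E_{j,j}`,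
all `E_{p,q}` with `p > q` in a common block of `a`, and all `E_{p,q}` with `p < q` in a common
block of `b`. -/
def seaweedSet (a b : List ℕ) (N : ℕ) : Set (Matrix (Fin N) (Fin N) ℂ) :=
  {M | ∃ j, M = Emat N j j} ∪
  {M | ∃ p q : Fin N, (q : ℕ) < p ∧ sameBlock a (p : ℕ) (q : ℕ) ∧ M = Emat N p q} ∪
  {M | ∃ p q : Fin N, (p : ℕ) < q ∧ sameBlock b (p : ℕ) (q : ℕ) ∧ M = Emat N p q}

/-- The seaweed subalgebra `p(a / b)` of `gl(N,ℂ)`, spanned by `seaweedSet a b N`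
(this set is closed under brackets, so the Lie span coincides with the linear span). -/
def seaweed (a b : List ℕ) (N : ℕ) : LieSubalgebra ℂ (Matrix (Fin N) (Fin N) ℂ) :=
  LieSubalgebra.lieSpan ℂ _ (seaweedSet a b N)

/-- The span of all brackets `⁅x,y⁆` with `x ∈ A`, `y ∈ B`. -/
def bracketSpan {L : Type*} [LieRing L] [LieAlgebra ℂ L] (A B : Submodule ℂ L) :
    Submodule ℂ L :=
  Submodule.span ℂ {m | ∃ x ∈ A, ∃ y ∈ B, m = ⁅x, y⁆}

/-- The lower central series of a subspace `A`: `A₀ = A`, `A_{k+1} = ⁅A, A_k⁆`. -/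
def lcsS {L : Type*} [LieRing L] [LieAlgebra ℂ L] (A : Submodule ℂ L) : ℕ → Submodule ℂ L
  | 0 => A
  | k + 1 => bracketSpan A (lcsS A k)

/-- The nilradical of a Lie subalgebra `s`: the largest nilpotent ideal of `s`, realized as the
supremum of all nilpotent ideals of `s`. -/
def nilrad {L : Type*} [LieRing L] [LieAlgebra ℂ L] (s : LieSubalgebra ℂ L) : Submodule ℂ L :=
  sSup {I : Submodule ℂ L |
    I ≤ s.toSubmodule ∧ (∀ x ∈ s, ∀ y ∈ I, ⁅x, y⁆ ∈ I) ∧ ∃ k, lcsS I k = ⊥}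

/-- The center `Z(s) = {x ∈ s : ⁅x,y⁆ = 0 for all y ∈ s}` of a Lie subalgebra, as a subspace of
the ambient Lie algebra. -/
def centerSub {L : Type*} [LieRing L] [LieAlgebra ℂ L] (s : LieSubalgebra ℂ L) :
    Submodule ℂ L where
  carrier := {x | x ∈ s ∧ ∀ y ∈ s, ⁅x, y⁆ = 0}
  add_mem' := by
    rintro a b ⟨ha, ha2⟩ ⟨hb, hb2⟩
    exact ⟨add_mem ha hb, fun y hy => by rw [add_lie, ha2 y hy, hb2 y hy, add_zero]⟩
  zero_mem' := ⟨zero_mem _, fun y _ => by rw [zero_lie]⟩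
  smul_mem' := by
    rintro c x ⟨hx, hx2⟩
    exact ⟨s.smul_mem c hx, fun y hy => by rw [smul_lie, hx2 y hy, smul_zero]⟩

/-- The span of those `E_{p,q} ∈ s` with `E_{q,p} ∉ s`. -/
def nilpart (a b : List ℕ) (N : ℕ) : Submodule ℂ (Matrix (Fin N) (Fin N) ℂ) :=
  Submodule.span ℂ {M | ∃ p q : Fin N,
    M = Emat N p q ∧ Emat N p q ∈ seaweed a b N ∧ Emat N q p ∉ seaweed a b N}

/-!
The seaweed algebra `s` is the incidence algebra of a preorder `≼` on `[N]`: the matrices supported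
on `{(p, q) | p ≼ q}`. The strict part `n`, spanned by the `E_{p,q}` with `p ≺ q`, is an ideal of
`s`, nilpotent because brackets with `n` raise the number of strict predecessors; as `Z(s)` brackets
`s` to zero, `n ⊕ Z(s)` is a nilpotent ideal. Conversely, an ideal `I` is stable under the diagonal
matrices, so with every `x` it contains the root components `x_{pq} E_{p,q}` and the diagonal part
of `x`. A nilpotent ideal holds no ad-eigenvector with nonzero eigenvalue: this forces `p ≺ q`
whenever `x_{pq} ≠ 0`, and the diagonal part to be constant along `≼`, hence central.
-/

open Matrix

section Support

variable {ι : Type*}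

def supportedOn (R : ι → ι → Prop) : Submodule ℂ (Matrix ι ι ℂ) where
  carrier := {M | ∀ i j, ¬ R i j → M i j = 0}
  add_mem' hM hM' i j h := by simp [hM i j h, hM' i j h]
  zero_mem' _ _ _ := rfl
  smul_mem' c M hM i j h := by simp [hM i j h]

variable {R R₁ R₂ R₃ : ι → ι → Prop} {M M' : Matrix ι ι ℂ}

lemma supportedOn_mono (h : ∀ i j, R₁ i j → R₂ i j) : supportedOn R₁ ≤ supportedOn R₂ :=
  fun _ hM i j hij => hM i j (mt (h i j) hij)

lemma single_mem_supportedOn [DecidableEq ι] {i j : ι} (h : R i j) (c : ℂ) :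
    single i j c ∈ supportedOn R := fun _ _ hij =>
  single_apply_of_ne _ _ _ _ _ fun he => hij (he.1 ▸ he.2 ▸ h)

lemma single_one_mem_supportedOn_iff [DecidableEq ι] {i j : ι} :
    single i j (1 : ℂ) ∈ supportedOn R ↔ R i j := by
  refine ⟨fun h => ?_, fun h => single_mem_supportedOn h 1⟩
  by_contra hij
  simpa using h i j hij

lemma supportedOn_eq_span [Fintype ι] [DecidableEq ι] :
    supportedOn R = Submodule.span ℂ {M | ∃ i j, M = single i j 1 ∧ R i j} := by
  refine le_antisymm (fun M hM => ?_) (Submodule.span_le.mpr ?_)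
  · rw [matrix_eq_sum_single M]
    refine Submodule.sum_mem _ fun i _ => Submodule.sum_mem _ fun j _ => ?_
    by_cases hij : R i j
    · rw [show single i j (M i j) = M i j • single i j 1 by simp [smul_single]]
      exact Submodule.smul_mem _ _ (Submodule.subset_span ⟨i, j, rfl, hij⟩)
    · simp [hM i j hij]
  · rintro _ ⟨i, j, rfl, hij⟩
    exact single_mem_supportedOn hij 1

lemma mul_mem_supportedOn [Fintype ι] (h : ∀ i k j, R₁ i k → R₂ k j → R₃ i j)
    (hM : M ∈ supportedOn R₁) (hM' : M' ∈ supportedOn R₂) : M * M' ∈ supportedOn R₃ := by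
  intro i j hij
  rw [mul_apply]
  refine Finset.sum_eq_zero fun k _ => ?_
  by_cases hik : R₁ i k
  · rw [hM' k j fun hkj => hij (h i k j hik hkj), mul_zero]
  · rw [hM i k hik, zero_mul]

lemma lie_mem_supportedOn [Fintype ι] (h₁₂ : ∀ i k j, R₁ i k → R₂ k j → R₃ i j)
    (h₂₁ : ∀ i k j, R₂ i k → R₁ k j → R₃ i j)
    (hM : M ∈ supportedOn R₁) (hM' : M' ∈ supportedOn R₂) : ⁅M, M'⁆ ∈ supportedOn R₃ := by
  rw [Ring.lie_def]
  exact sub_mem (mul_mem_supportedOn h₁₂ hM hM') (mul_mem_supportedOn h₂₁ hM' hM)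

end Support

section LowerCentralSeries

variable {L : Type*} [LieRing L] [LieAlgebra ℂ L]

lemma bracketSpan_le_iff {A B C : Submodule ℂ L} :
    bracketSpan A B ≤ C ↔ ∀ x ∈ A, ∀ y ∈ B, ⁅x, y⁆ ∈ C := by
  refine Submodule.span_le.trans ⟨fun h x hx y hy => h ⟨x, hx, y, hy, rfl⟩, ?_⟩
  rintro h _ ⟨x, hx, y, hy, rfl⟩
  exact h x hx y hy

lemma lcsS_le_of_le {A : Submodule ℂ L} {s : LieSubalgebra ℂ L} (hA : A ≤ s.toSubmodule) :
    ∀ k, lcsS A k ≤ s.toSubmodule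
  | 0 => hA
  | k + 1 => bracketSpan_le_iff.mpr fun _ hx _ hy => s.lie_mem (hA hx) (lcsS_le_of_le hA k hy)

lemma mem_lcsS_of_lie_eq_smul {I : Submodule ℂ L} {u v : L} {c : ℂ} (hu : u ∈ I) (hv : v ∈ I)
    (hc : c ≠ 0) (h : ⁅u, v⁆ = c • v) : ∀ k, v ∈ lcsS I k
  | 0 => hv
  | k + 1 => by
    have hm : ⁅u, v⁆ ∈ lcsS I (k + 1) :=
      Submodule.subset_span ⟨u, hu, v, mem_lcsS_of_lie_eq_smul hu hv hc h k, rfl⟩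
    rwa [h, Submodule.smul_mem_iff _ hc] at hm

lemma eq_zero_of_lie_eq_smul {I : Submodule ℂ L} (hI : ∃ k, lcsS I k = ⊥) {u v : L} {c : ℂ}
    (hu : u ∈ I) (hv : v ∈ I) (hc : c ≠ 0) (h : ⁅u, v⁆ = c • v) : v = 0 := by
  obtain ⟨k, hk⟩ := hI
  simpa [hk] using mem_lcsS_of_lie_eq_smul hu hv hc h k

variable {s : LieSubalgebra ℂ L} {n : Submodule ℂ L}

lemma exists_lie_eq_of_mem_sup_centerSub {t y : L} (ht : t ∈ n ⊔ centerSub s) (hy : y ∈ s) :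
    ∃ m ∈ n, ⁅t, y⁆ = ⁅m, y⁆ := by
  obtain ⟨m, hm, z, hz, rfl⟩ := Submodule.mem_sup.mp ht
  exact ⟨m, hm, by rw [add_lie, hz.2 y hy, add_zero]⟩

lemma lie_mem_sup_centerSub (hn : ∀ x ∈ s, ∀ y ∈ n, ⁅x, y⁆ ∈ n) {x t : L} (hx : x ∈ s)
    (ht : t ∈ n ⊔ centerSub s) : ⁅x, t⁆ ∈ n ⊔ centerSub s := by
  obtain ⟨m, hm, he⟩ := exists_lie_eq_of_mem_sup_centerSub ht hx
  rw [← lie_skew, he, lie_skew]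
  exact Submodule.mem_sup_left (hn x hx m hm)

lemma sup_centerSub_le (hn : n ≤ s.toSubmodule) : n ⊔ centerSub s ≤ s.toSubmodule :=
  sup_le hn fun _ hz => hz.1

lemma lcsS_sup_centerSub_le (hn : n ≤ s.toSubmodule) :
    ∀ k, lcsS (n ⊔ centerSub s) (k + 1) ≤ lcsS n (k + 1)
  | 0 => bracketSpan_le_iff.mpr fun x hx y hy => by
    obtain ⟨m, hm, he⟩ := exists_lie_eq_of_mem_sup_centerSub hx (sup_centerSub_le hn hy)
    obtain ⟨m', hm', he'⟩ := exists_lie_eq_of_mem_sup_centerSub hy (hn hm)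
    rw [he, ← lie_skew, he', lie_skew]
    exact Submodule.subset_span ⟨m, hm, m', hm', rfl⟩
  | k + 1 => bracketSpan_le_iff.mpr fun x hx y hy => by
    obtain ⟨m, hm, he⟩ :=
      exists_lie_eq_of_mem_sup_centerSub hx (lcsS_le_of_le (sup_centerSub_le hn) (k + 1) hy)
    rw [he]
    exact Submodule.subset_span ⟨m, hm, y, lcsS_sup_centerSub_le hn k hy, rfl⟩

end LowerCentralSeries

section Diagonal

variable {ι : Type*} [Fintype ι] [DecidableEq ι]

lemma lie_diagonal_apply {R : Type*} [CommRing R] (f : ι → R) (x : Matrix ι ι R) (i j : ι) :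
    ⁅diagonal f, x⁆ i j = (f i - f j) * x i j := by
  rw [Ring.lie_def, Matrix.sub_apply, diagonal_mul, mul_diagonal]
  ring

lemma lie_diagonal_single {R : Type*} [CommRing R] (f : ι → R) (i j : ι) (c : R) :
    ⁅diagonal f, single i j c⁆ = (f i - f j) • single i j c := by
  ext k l
  rw [lie_diagonal_apply, Matrix.smul_apply, smul_eq_mul]
  by_cases h : i = k ∧ j = l
  · obtain ⟨rfl, rfl⟩ := h
    rfl
  · simp [single_apply_of_ne _ _ _ _ _ h]

-- `ad E_{p,p} ∘ ad E_{q,q}` scales `E_{i,j}` by `(δ_{ip} - δ_{jp})(δ_{iq} - δ_{jq})`, which is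
-- `-1` at `(p,q)` and `(q,p)` and `0` elsewhere; one more `ad E_{p,p}` separates these two.
lemma single_entry_eq_lie (x : Matrix ι ι ℂ) {p q : ι} (hpq : p ≠ q) :
    single p q (x p q) = -(2⁻¹ : ℂ) • (⁅single p p (1 : ℂ), ⁅single q q (1 : ℂ), x⁆⁆ +
      ⁅single p p (1 : ℂ), ⁅single p p (1 : ℂ), ⁅single q q (1 : ℂ), x⁆⁆⁆) := by
  simp only [← diagonal_single]
  ext i j
  simp only [Matrix.smul_apply, Matrix.add_apply, lie_diagonal_apply, single_apply,
    Pi.single_apply, smul_eq_mul, @eq_comm _ p i, @eq_comm _ q j]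
  by_cases hi : i = p <;> by_cases hj : j = q <;> by_cases hi' : i = q <;> by_cases hj' : j = p <;>
    simp [hi, hj, hi', hj', hpq, hpq.symm] <;> ring

lemma eq_diagonal_add_sum_single {α : Type*} [AddCommMonoid α] (x : Matrix ι ι α) :
    x = diagonal (fun i => x i i) + ∑ i, ∑ j ∈ Finset.univ.erase i, single i j (x i j) := by
  conv_lhs => rw [matrix_eq_sum_single x]
  rw [← sum_single_eq_diagonal, ← Finset.sum_add_distrib]
  exact Finset.sum_congr rfl fun i _ => (Finset.add_sum_erase _ _ (Finset.mem_univ i)).symm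

end Diagonal

section StrictPart

variable {ι : Type*} (r : ι → ι → Prop)

def strictPart (i j : ι) : Prop := r i j ∧ ¬ r j i

def strictPredCount (j : ι) : ℕ := {i | strictPart r i j}.ncard

variable {r}

lemma strictPart_irrefl (i : ι) : ¬ strictPart r i i := fun h => h.2 h.1

variable [IsPreorder ι r]

lemma strictPart_of_rel_of_strictPart {i j k : ι} (hij : r i j) (hjk : strictPart r j k) :
    strictPart r i k :=
  ⟨trans_of r hij hjk.1, fun hki => hjk.2 (trans_of r hki hij)⟩

lemma strictPart_of_strictPart_of_rel {i j k : ι} (hij : strictPart r i j) (hjk : r j k) :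
    strictPart r i k :=
  ⟨trans_of r hij.1 hjk, fun hki => hij.2 (trans_of r hjk hki)⟩

lemma strictPredCount_lt [Finite ι] {i j : ι} (h : strictPart r i j) :
    strictPredCount r i < strictPredCount r j := by
  refine Set.ncard_lt_ncard ⟨fun k hk => strictPart_of_strictPart_of_rel hk h.1, fun hsub => ?_⟩
  exact strictPart_irrefl i (hsub h)

end StrictPart

section Incidence

variable {ι : Type*} [Fintype ι] [DecidableEq ι] (r : ι → ι → Prop)

def incidenceSubalgebra [IsTrans ι r] : LieSubalgebra ℂ (Matrix ι ι ℂ) :=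
  { supportedOn r with
    lie_mem' := lie_mem_supportedOn (fun _ _ _ => trans_of r) (fun _ _ _ => trans_of r) }

variable {r} [IsPreorder ι r]

@[simp]
lemma mem_incidenceSubalgebra {x : Matrix ι ι ℂ} :
    x ∈ incidenceSubalgebra r ↔ x ∈ supportedOn r := Iff.rfl

lemma supportedOn_strictPart_le :
    supportedOn (strictPart r) ≤ (incidenceSubalgebra r).toSubmodule :=
  supportedOn_mono fun _ _ => And.left

lemma lie_mem_supportedOn_strictPart {x y : Matrix ι ι ℂ} (hx : x ∈ incidenceSubalgebra r)
    (hy : y ∈ supportedOn (strictPart r)) : ⁅x, y⁆ ∈ supportedOn (strictPart r) :=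
  lie_mem_supportedOn (R₁ := r) (fun _ _ _ => strictPart_of_rel_of_strictPart)
    (fun _ _ _ => strictPart_of_strictPart_of_rel) hx hy

lemma lcsS_supportedOn_strictPart_le (k : ℕ) :
    lcsS (supportedOn (strictPart r)) k ≤
      supportedOn fun i j => strictPredCount r i + (k + 1) ≤ strictPredCount r j := by
  induction k with
  | zero => exact supportedOn_mono fun _ _ h => strictPredCount_lt h
  | succ k ih =>
    refine bracketSpan_le_iff.mpr fun x hx y hy => ?_
    refine lie_mem_supportedOn (R₁ := fun i j => strictPredCount r i + 1 ≤ strictPredCount r j)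
      (fun _ _ _ => by omega) (fun _ _ _ => by omega) ?_ (ih hy)
    exact supportedOn_mono (fun _ _ h => strictPredCount_lt h) hx

lemma lcsS_supportedOn_strictPart_eq_bot {k : ℕ} (hk : Nat.card ι ≤ k) :
    lcsS (supportedOn (strictPart r)) k = ⊥ := by
  refine eq_bot_iff.mpr fun x hx => (Submodule.mem_bot ℂ).mpr (ext fun i j => ?_)
  refine lcsS_supportedOn_strictPart_le _ hx i j fun h => ?_
  have := Set.ncard_le_card {k | strictPart r k j}
  exact absurd h (by unfold strictPredCount; omega)

end Incidence

section NilpotentIdeals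

variable {ι : Type*} [Fintype ι] [DecidableEq ι] {r : ι → ι → Prop} [IsPreorder ι r]
  {I : Submodule ℂ (Matrix ι ι ℂ)}

lemma single_mem_incidenceSubalgebra {i j : ι} (h : r i j) (c : ℂ) :
    single i j c ∈ incidenceSubalgebra r :=
  single_mem_supportedOn h c

lemma single_entry_mem_of_lie_mem (hI : ∀ x ∈ incidenceSubalgebra r, ∀ y ∈ I, ⁅x, y⁆ ∈ I)
    {x : Matrix ι ι ℂ} (hx : x ∈ I) {p q : ι} (hpq : p ≠ q) : single p q (x p q) ∈ I := by
  have hE (i : ι) : single i i (1 : ℂ) ∈ incidenceSubalgebra r :=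
    single_mem_incidenceSubalgebra (refl_of r i) 1
  have h₁ := hI _ (hE p) _ (hI _ (hE q) _ hx)
  rw [single_entry_eq_lie x hpq]
  exact I.smul_mem _ (I.add_mem h₁ (hI _ (hE p) _ h₁))

/-- If `E_{q,p}` also lay in the algebra, `E_{q,q} - E_{p,p} = ⁅E_{q,p}, E_{p,q}⁆` would lie in
`I` and act on `E_{p,q} ∈ I` with eigenvalue `-2`. -/
lemma not_rel_of_single_mem (hI : ∀ x ∈ incidenceSubalgebra r, ∀ y ∈ I, ⁅x, y⁆ ∈ I)
    (hnil : ∃ k, lcsS I k = ⊥) {p q : ι} (hpq : p ≠ q) (hE : single p q (1 : ℂ) ∈ I) :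
    ¬ r q p := by
  intro hqp
  have hd : ⁅single q p (1 : ℂ), single p q (1 : ℂ)⁆ =
      diagonal (Pi.single q 1 - Pi.single p 1) := by
    rw [Ring.lie_def, single_mul_single_same, single_mul_single_same, mul_one,
      ← diagonal_single, ← diagonal_single]
    exact diagonal_sub _ _
  have hu := hI _ (single_mem_incidenceSubalgebra hqp 1) _ hE
  rw [hd] at hu
  have heigen : ⁅diagonal (Pi.single q 1 - Pi.single p 1 : ι → ℂ), single p q (1 : ℂ)⁆ =
      (-2 : ℂ) • single p q 1 := by
    rw [lie_diagonal_single]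
    congr 1
    simp [hpq, hpq.symm]
    norm_num
  have := eq_zero_of_lie_eq_smul hnil hu hE (by norm_num) heigen
  simpa using congr_fun₂ this p q

lemma single_entry_mem_supportedOn_strictPart (hIs : I ≤ (incidenceSubalgebra r).toSubmodule)
    (hI : ∀ x ∈ incidenceSubalgebra r, ∀ y ∈ I, ⁅x, y⁆ ∈ I) (hnil : ∃ k, lcsS I k = ⊥)
    {x : Matrix ι ι ℂ} (hx : x ∈ I) {p q : ι} (hpq : p ≠ q) :
    single p q (x p q) ∈ supportedOn (strictPart r) := by
  by_cases h0 : x p q = 0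
  · rw [h0, single_zero]
    exact zero_mem _
  have hE : single p q (1 : ℂ) ∈ I := by
    have := single_entry_mem_of_lie_mem hI hx hpq
    rwa [show single p q (x p q) = x p q • single p q 1 by simp [smul_single],
      Submodule.smul_mem_iff _ h0] at this
  refine single_mem_supportedOn ⟨by_contra fun h => h0 (hIs hx p q h), ?_⟩ _
  exact not_rel_of_single_mem hI hnil hpq hE

/-- If `d_i ≠ d_j` for some `r i j`, then `E_{i,j} ∈ I`, being a multiple of `⁅E_{i,j}, d⁆`, is an
eigenvector of `ad d` with eigenvalue `d_i - d_j ≠ 0`. -/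
lemma diagonal_mem_centerSub (hIs : I ≤ (incidenceSubalgebra r).toSubmodule)
    (hI : ∀ x ∈ incidenceSubalgebra r, ∀ y ∈ I, ⁅x, y⁆ ∈ I) (hnil : ∃ k, lcsS I k = ⊥)
    {f : ι → ℂ} (hd : diagonal f ∈ I) : diagonal f ∈ centerSub (incidenceSubalgebra r) := by
  have hconst : ∀ i j, r i j → f i = f j := by
    intro i j hij
    by_contra hne
    have hc : f i - f j ≠ 0 := sub_ne_zero.mpr hne
    have hE : single i j (1 : ℂ) ∈ I := by
      have := hI _ (single_mem_incidenceSubalgebra hij 1) _ hd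
      rwa [← lie_skew, lie_diagonal_single, ← neg_smul,
        Submodule.smul_mem_iff _ (neg_ne_zero.mpr hc)] at this
    have := eq_zero_of_lie_eq_smul hnil hd hE hc (lie_diagonal_single f i j 1)
    simpa using congr_fun₂ this i j
  refine ⟨hIs hd, fun y hy => ext fun i j => ?_⟩
  rw [lie_diagonal_apply]
  by_cases hij : r i j
  · simp [hconst i j hij]
  · simp [hy i j hij]

lemma le_supportedOn_strictPart_sup_centerSub (hIs : I ≤ (incidenceSubalgebra r).toSubmodule)
    (hI : ∀ x ∈ incidenceSubalgebra r, ∀ y ∈ I, ⁅x, y⁆ ∈ I) (hnil : ∃ k, lcsS I k = ⊥) :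
    I ≤ supportedOn (strictPart r) ⊔ centerSub (incidenceSubalgebra r) := by
  intro x hx
  have hsplit := eq_diagonal_add_sum_single x
  set y := ∑ i, ∑ j ∈ Finset.univ.erase i, single i j (x i j)
  have hyI : y ∈ I := Submodule.sum_mem _ fun i _ => Submodule.sum_mem _ fun j hj =>
    single_entry_mem_of_lie_mem hI hx (Finset.ne_of_mem_erase hj).symm
  have hyn : y ∈ supportedOn (strictPart r) :=
    Submodule.sum_mem _ fun i _ => Submodule.sum_mem _ fun j hj =>
      single_entry_mem_supportedOn_strictPart hIs hI hnil hx (Finset.ne_of_mem_erase hj).symm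
  have hdI : diagonal (fun i => x i i) ∈ I := by
    rw [eq_sub_of_add_eq hsplit.symm]
    exact I.sub_mem hx hyI
  rw [hsplit, add_comm]
  exact add_mem (Submodule.mem_sup_left hyn)
    (Submodule.mem_sup_right (diagonal_mem_centerSub hIs hI hnil hdI))

lemma supportedOn_strictPart_inf_centerSub :
    supportedOn (strictPart r) ⊓ centerSub (incidenceSubalgebra r) = ⊥ := by
  refine eq_bot_iff.mpr fun x ⟨hn, hz⟩ => (Submodule.mem_bot ℂ).mpr (ext fun i j => ?_)
  by_cases hij : i = j
  · exact hij ▸ hn i i (strictPart_irrefl i)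
  · have h := hz.2 _ (single_mem_incidenceSubalgebra (refl_of r i) 1)
    rw [← lie_skew, neg_eq_zero, ← diagonal_single] at h
    simpa [lie_diagonal_apply, hij, Ne.symm hij] using congr_fun₂ h i j

theorem nilrad_incidenceSubalgebra :
    nilrad (incidenceSubalgebra r) =
      supportedOn (strictPart r) ⊔ centerSub (incidenceSubalgebra r) := by
  refine le_antisymm (sSup_le fun I ⟨hIs, hI, hnil⟩ =>
    le_supportedOn_strictPart_sup_centerSub hIs hI hnil) (le_sSup ⟨?_, ?_, Nat.card ι + 1, ?_⟩)
  · exact sup_centerSub_le supportedOn_strictPart_le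
  · exact fun x hx t ht => lie_mem_sup_centerSub
      (fun _ hx' _ hy => lie_mem_supportedOn_strictPart hx' hy) hx ht
  · exact le_bot_iff.mp ((lcsS_sup_centerSub_le supportedOn_strictPart_le _).trans
      (lcsS_supportedOn_strictPart_eq_bot (Nat.le_succ _)).le)

end NilpotentIdeals

section Seaweed

-- `E_{p,q}` spans a direction of `p(a / b)` exactly when no partial sum of `a` falls in `(q, p]`
-- and none of `b` falls in `(p, q]`; in this form transitivity is immediate.
def seaweedRel (a b : List ℕ) {N : ℕ} (p q : Fin N) : Prop :=
  (∀ k ∈ PS a, ¬ ((q : ℕ) < k ∧ k ≤ p)) ∧ ∀ k ∈ PS b, ¬ ((p : ℕ) < k ∧ k ≤ q)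

variable {a b : List ℕ} {N : ℕ}

instance : IsPreorder (Fin N) (seaweedRel a b) where
  refl _ := ⟨fun _ _ => by omega, fun _ _ => by omega⟩
  trans _ _ _ h₁ h₂ :=
    ⟨fun k hk => by have := h₁.1 k hk; have := h₂.1 k hk; omega,
      fun k hk => by have := h₁.2 k hk; have := h₂.2 k hk; omega⟩

lemma seaweedSet_subset_incidenceSubalgebra :
    seaweedSet a b N ⊆ incidenceSubalgebra (seaweedRel (N := N) a b) := by
  rintro _ ((⟨p, rfl⟩ | ⟨p, q, hqp, hpq, rfl⟩) | ⟨p, q, hpq, hpq', rfl⟩)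
  · exact single_mem_supportedOn (refl_of _ p) 1
  · refine single_mem_supportedOn ⟨fun k hk => ?_, fun k _ => by omega⟩ 1
    have := hpq k hk
    omega
  · refine single_mem_supportedOn ⟨fun k _ => by omega, fun k hk => ?_⟩ 1
    have := hpq' k hk
    omega

lemma single_mem_seaweedSet {p q : Fin N} (h : seaweedRel a b p q) :
    single p q 1 ∈ seaweedSet a b N := by
  rcases lt_trichotomy (p : ℕ) q with hpq | hpq | hpq
  · exact Or.inr ⟨p, q, hpq, fun k hk => by have := h.2 k hk; omega, rfl⟩
  · exact Or.inl (Or.inl ⟨p, by rw [Fin.ext hpq]; rfl⟩)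
  · exact Or.inl (Or.inr ⟨p, q, hpq, fun k hk => by have := h.1 k hk; omega, rfl⟩)

lemma seaweed_eq_incidenceSubalgebra :
    seaweed a b N = incidenceSubalgebra (seaweedRel a b) := by
  refine le_antisymm (LieSubalgebra.lieSpan_le.mpr seaweedSet_subset_incidenceSubalgebra)
    fun x hx => ?_
  have hle : supportedOn (seaweedRel a b) ≤ (seaweed a b N).toSubmodule := by
    rw [supportedOn_eq_span, Submodule.span_le]
    rintro _ ⟨p, q, rfl, h⟩
    exact LieSubalgebra.subset_lieSpan (single_mem_seaweedSet h)
  exact hle hx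

lemma nilpart_eq_supportedOn_strictPart :
    nilpart a b N = supportedOn (strictPart (seaweedRel a b)) := by
  simp only [nilpart, seaweed_eq_incidenceSubalgebra, Emat, mem_incidenceSubalgebra,
    single_one_mem_supportedOn_iff]
  rw [supportedOn_eq_span]
  rfl

end Seaweed

theorem nilradical_decomposition_general (a b : List ℕ) (N : ℕ) :
    nilrad (seaweed a b N) = nilpart a b N ⊔ centerSub (seaweed a b N) ∧
    nilpart a b N ⊓ centerSub (seaweed a b N) = ⊥ := by
  rw [nilpart_eq_supportedOn_strictPart, seaweed_eq_incidenceSubalgebra]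
  exact ⟨nilrad_incidenceSubalgebra, supportedOn_strictPart_inf_centerSub⟩

/-- The nilradical of a seaweed algebra `s` decomposes as the (internal) direct sum
`n(s) = span{E_{p,q} ∈ s : E_{q,p} ∉ s} ⊕ Z(s)`. -/
theorem nilradical_decomposition (a b : List ℕ) (N : ℕ)
    (hsa : a.sum = N) (hsb : b.sum = N)
    (hpa : ∀ n ∈ a, 0 < n) (hpb : ∀ n ∈ b, 0 < n) :
    nilrad (seaweed a b N) = nilpart a b N ⊔ centerSub (seaweed a b N) ∧
    nilpart a b N ⊓ centerSub (seaweed a b N) = ⊥ :=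
  nilradical_decomposition_general a b N
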